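/- arXiv:2005.05117 — 8 statements merged into one kernel-verified Lean document; each statement's English description precedes it below -/
import Mathlib

section
/- Suppose 1 ≤ K ≤ N and all N·M similarity values s_{i,j} are pairwise distinct. Then the boundary sets BSet(i,j;K), for i ∈ {1,…,N} and j ∈ {1,…,M}, form a partition of the set of all possible worlds: every possible world w lies in exactly one boundary set, namely BSet(i, w(i); K) where i is the index in Top(K,w) whose similarity s_{i,w(i)} is smallest. -/
open Finset

/-- The top-`K` set of a possible world `w`: the set of indices `i` such that at most `K`
indices `i'` have similarity `s i' (w i')` at least `s i (w i)`. Under the assumption that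
all similarities are pairwise distinct, this is the set of the `K` indices with the largest
similarities. -/
noncomputable def topK {N M : ℕ} (s : Fin N → Fin M → ℝ) (K : ℕ) (w : Fin N → Fin M) : Finset (Fin N) :=
  Finset.univ.filter fun i =>
    (Finset.univ.filter fun i' => s i (w i) ≤ s i' (w i')).card ≤ K

/-- The boundary set `BSet(i, j; K)`: possible worlds `w` with `w i = j`, `i ∈ Top(K, w)`,
and `s i j` minimal among the similarities of the members of `Top(K, w)`. -/
noncomputable def BSet {N M : ℕ} (s : Fin N → Fin M → ℝ) (K : ℕ) (i : Fin N) (j : Fin M) :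
    Finset (Fin N → Fin M) :=
  Finset.univ.filter fun w =>
    w i = j ∧ i ∈ topK s K w ∧ ∀ i' ∈ topK s K w, s i j ≤ s i' (w i')

/-- If `1 ≤ K ≤ N` and all `N·M` similarity values are pairwise distinct,
then the boundary sets partition the set of all possible worlds: every possible world `w`
lies in exactly one boundary set, namely `BSet(i, w i; K)` where `i` is the index in
`Top(K, w)` whose similarity is smallest. -/
theorem stmt0 (N M K : ℕ) (hK1 : 1 ≤ K) (hKN : K ≤ N)
    (s : Fin N → Fin M → ℝ)
    (hs : Function.Injective fun p : Fin N × Fin M => s p.1 p.2) :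
    ∀ w : Fin N → Fin M,
      (∃! p : Fin N × Fin M, w ∈ BSet s K p.1 p.2) ∧
      (∀ i : Fin N, i ∈ topK s K w → (∀ i' ∈ topK s K w, s i (w i) ≤ s i' (w i')) →
        w ∈ BSet s K i (w i)) := by

  intro w
  have hf : Function.Injective fun i : Fin N => s i (w i) := by
    intro a b hab
    have h := @hs (a, w a) (b, w b) hab
    exact congrArg Prod.fst h
  have hN : 0 < N := lt_of_lt_of_le hK1 hKN
  obtain ⟨imax, -, hmax⟩ := Finset.exists_max_image Finset.univ
    (fun i => s i (w i)) ⟨⟨0, hN⟩, Finset.mem_univ _⟩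
  have hmaxtop : imax ∈ topK s K w := by
    simp only [topK, Finset.mem_filter, Finset.mem_univ, true_and]
    have hsub : (Finset.univ.filter fun i' => s imax (w imax) ≤ s i' (w i')) ⊆ {imax} := by
      intro x hx
      simp only [Finset.mem_filter] at hx
      have hxe : s x (w x) = s imax (w imax) :=
        le_antisymm (hmax x (Finset.mem_univ x)) hx.2
      simp [hf hxe]
    calc (Finset.univ.filter fun i' => s imax (w imax) ≤ s i' (w i')).card
        ≤ ({imax} : Finset (Fin N)).card := Finset.card_le_card hsub
      _ = 1 := Finset.card_singleton _
      _ ≤ K := hK1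
  obtain ⟨i₀, hi₀, hmin⟩ := Finset.exists_min_image (topK s K w)
    (fun i => s i (w i)) ⟨imax, hmaxtop⟩
  constructor
  · refine ⟨(i₀, w i₀), ?_, ?_⟩
    · simp only [BSet, Finset.mem_filter, Finset.mem_univ, true_and]
      exact ⟨hi₀, hmin⟩
    · rintro ⟨i, j⟩ hmem
      simp only [BSet, Finset.mem_filter, Finset.mem_univ, true_and] at hmem
      obtain ⟨hj, hitop, hle⟩ := hmem
      have h1 : s i (w i) ≤ s i₀ (w i₀) := by rw [hj]; exact hle i₀ hi₀
      have h2 : s i₀ (w i₀) ≤ s i (w i) := hmin i hitop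
      have hii : i = i₀ := hf (le_antisymm h1 h2)
      subst hii
      subst hj
      rfl
  · intro i hi hmin'
    simp only [BSet, Finset.mem_filter, Finset.mem_univ, true_and]
    exact ⟨hi, hmin'⟩
end

section
/- Suppose 1 ≤ K ≤ N and all N·M similarity values s_{i,j} are pairwise distinct. Then for every i ∈ {1,…,N} and j ∈ {1,…,M}, the size of the boundary set satisfies |BSet(i,j;K)| = Σ_S ( ∏_{n ∉ S, n ≠ i} α_{i,j}[n] ) · ( ∏_{n ∈ S} (M − α_{i,j}[n]) ), where the sum ranges over all subsets S ⊆ {1,…,N} \ {i} of size K − 1. -/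
open Finset

/-- The similarity tally `α_{i,j}[n]`: the number of candidates `m` of the `n`-th candidate
set whose similarity is at most `s i j`. -/
noncomputable def alpha {N M : ℕ} (s : Fin N → Fin M → ℝ) (i : Fin N) (j : Fin M)
    (n : Fin N) : ℕ :=
  (Finset.univ.filter fun m => s n m ≤ s i j).card

/-!
With distinct similarities, `w ∈ BSet(i,j;K)` exactly when `w i = j` and `i` has rank `K`
in `w`, i.e. exactly `K - 1` other indices `n` choose a candidate with `s n (w n) > s i j`.
Grouping these worlds by the set `S` of those indices, each group is a box of worlds:
an index `n ∈ S` may choose any of its `M - α[n]` candidates above `s i j`, an index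
`n ∉ S ∪ {i}` any of its `α[n]` others.
-/

open Function

section TopRank

variable {ι α : Type*} [Fintype ι] [LinearOrder α] {t : ι → α}

def topRank (t : ι → α) (x : ι) : ℕ := #{y | t x ≤ t y}

theorem topRank_le_topRank_of_le {x y : ι} (h : t x ≤ t y) : topRank t y ≤ topRank t x :=
  card_le_card <| monotone_filter_right _ fun _ _ => h.trans

theorem topRank_lt_topRank_of_lt {x y : ι} (h : t x < t y) : topRank t y < topRank t x := by
  refine card_lt_card <| (ssubset_iff_of_subset ?_).2 ⟨x, by simp, by simpa using h⟩
  exact monotone_filter_right _ fun _ _ => h.le.trans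

theorem topRank_injective (ht : Injective t) : Injective (topRank t) := by
  intro x y hxy
  rcases lt_trichotomy (t x) (t y) with h | h | h
  · exact absurd hxy (topRank_lt_topRank_of_lt h).ne'
  · exact ht h
  · exact absurd hxy (topRank_lt_topRank_of_lt h).ne

theorem topRank_mem_Icc (x : ι) : topRank t x ∈ Icc 1 (Fintype.card ι) :=
  mem_Icc.2 ⟨card_pos.2 ⟨x, by simp⟩, card_filter_le _ _⟩

theorem exists_topRank_eq (ht : Injective t) {k : ℕ} (hk : k ∈ Icc 1 (Fintype.card ι)) :
    ∃ x, topRank t x = k := by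
  have himage : univ.image (topRank t) = Icc 1 (Fintype.card ι) := by
    refine eq_of_subset_of_card_le (image_subset_iff.2 fun x _ => topRank_mem_Icc x) ?_
    rw [card_image_of_injective _ (topRank_injective ht), Nat.card_Icc, card_univ]
    omega
  obtain ⟨x, -, hx⟩ := mem_image.1 (himage ▸ hk)
  exact ⟨x, hx⟩

theorem topRank_le_and_min_iff_topRank_eq (ht : Injective t) {K : ℕ}
    (hK : K ≤ Fintype.card ι) (i : ι) :
    (topRank t i ≤ K ∧ ∀ x, topRank t x ≤ K → t i ≤ t x) ↔ topRank t i = K := by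
  constructor
  · rintro ⟨hle, hmin⟩
    refine hle.antisymm (not_lt.1 fun hlt => ?_)
    obtain ⟨x, hx⟩ :=
      exists_topRank_eq ht (k := topRank t i + 1) (mem_Icc.2 ⟨by omega, by omega⟩)
    have := topRank_le_topRank_of_le (hmin x (by omega))
    omega
  · rintro rfl
    exact ⟨le_rfl, fun x hx => not_lt.1 fun hlt => (topRank_lt_topRank_of_lt hlt).not_ge hx⟩

theorem topRank_eq_card_erase_lt_add_one [DecidableEq ι] (ht : Injective t) (i : ι) :
    topRank t i = #{y ∈ univ.erase i | t i < t y} + 1 := by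
  have : ({y | t i ≤ t y} : Finset ι) = insert i {y ∈ univ.erase i | t i < t y} := by
    ext y
    rcases eq_or_ne y i with rfl | hy
    · simp
    · simp [hy, hy.symm, le_iff_lt_or_eq, ht.eq_iff]
  rw [topRank, this, card_insert_of_notMem (by simp)]

end TopRank

theorem card_filter_apply_eq_and_filter_eq {ι β : Type*} [Fintype ι] [DecidableEq ι]
    [Fintype β] [DecidableEq β] (P : ι → β → Prop) [∀ n, DecidablePred (P n)]
    (i : ι) (j : β) {S : Finset ι} (hS : S ⊆ univ.erase i) :
    #{w : ι → β | w i = j ∧ {n ∈ univ.erase i | P n (w n)} = S} =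
      (∏ n ∈ univ.erase i \ S, #{m | ¬P n m}) * ∏ n ∈ S, #{m | P n m} := by
  set A : ι → Finset β := fun n =>
    if n = i then {j}
    else if n ∈ S then ({m | P n m} : Finset β) else ({m | ¬P n m} : Finset β)
  have hpi : ({w | w i = j ∧ {n ∈ univ.erase i | P n (w n)} = S} : Finset (ι → β)) =
      Fintype.piFinset A := by
    ext w
    simp only [mem_filter, mem_univ, true_and, Fintype.mem_piFinset, A]
    constructor
    · rintro ⟨rfl, rfl⟩ n
      rcases eq_or_ne n i with rfl | hn
      · simp
      · by_cases hP : P n (w n) <;> simp [hn, hP]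
    · intro h
      refine ⟨by simpa using h i, ?_⟩
      ext n
      rcases eq_or_ne n i with rfl | hn
      · simpa using fun hiS => (mem_erase.1 (hS hiS)).1 rfl
      · have := h n
        by_cases hnS : n ∈ S <;> simp_all
  rw [hpi, Fintype.card_piFinset, ← mul_prod_erase univ _ (mem_univ i), ← prod_sdiff hS]
  simp only [A, if_pos, card_singleton, one_mul]
  congr 1 <;> refine prod_congr rfl fun n hn => ?_
  · simp [(mem_erase.1 (mem_sdiff.1 hn).1).1, (mem_sdiff.1 hn).2]
  · simp [(mem_erase.1 (hS hn)).1, hn]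

theorem injective_similarity_of_world {N M : ℕ} {s : Fin N → Fin M → ℝ}
    (hs : Injective fun p : Fin N × Fin M => s p.1 p.2) (w : Fin N → Fin M) :
    Injective fun n => s n (w n) :=
  fun a b hab => congrArg Prod.fst (@hs (a, w a) (b, w b) hab)

theorem mem_BSet_iff {N M K : ℕ} (hK1 : 1 ≤ K) (hKN : K ≤ N) {s : Fin N → Fin M → ℝ}
    (hs : Injective fun p : Fin N × Fin M => s p.1 p.2) {i : Fin N} {j : Fin M}
    {w : Fin N → Fin M} :
    w ∈ BSet s K i j ↔ w i = j ∧ #{n ∈ univ.erase i | s i j < s n (w n)} = K - 1 := by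
  have ht := injective_similarity_of_world hs w
  have key := topRank_le_and_min_iff_topRank_eq ht (K := K) (by simpa using hKN) i
  have hrank := topRank_eq_card_erase_lt_add_one ht i
  simp only [BSet, topK, mem_filter, mem_univ, true_and]
  constructor
  · rintro ⟨rfl, hi, hmin⟩
    have := key.1 ⟨hi, hmin⟩
    exact ⟨rfl, by omega⟩
  · rintro ⟨rfl, hcard⟩
    exact ⟨rfl, key.2 (by omega)⟩

/-- If `1 ≤ K ≤ N` and all similarities are pairwise distinct, then
`|BSet(i,j;K)| = Σ_S (∏_{n ∉ S, n ≠ i} α_{i,j}[n]) · (∏_{n ∈ S} (M − α_{i,j}[n]))`,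
summing over all subsets `S ⊆ {1,…,N} \ {i}` of size `K − 1`. -/
theorem stmt1 (N M K : ℕ) (hK1 : 1 ≤ K) (hKN : K ≤ N)
    (s : Fin N → Fin M → ℝ)
    (hs : Function.Injective fun p : Fin N × Fin M => s p.1 p.2)
    (i : Fin N) (j : Fin M) :
    (BSet s K i j).card =
      ∑ S ∈ (Finset.univ.erase i).powersetCard (K - 1),
        (∏ n ∈ (Finset.univ.erase i) \ S, alpha s i j n) *
          ∏ n ∈ S, (M - alpha s i j n) := by
  set above : (Fin N → Fin M) → Finset (Fin N) := fun w =>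
    {n ∈ univ.erase i | s i j < s n (w n)}
  rw [card_eq_sum_card_fiberwise (f := above) (t := (univ.erase i).powersetCard (K - 1))
    fun w hw => mem_powersetCard.2 ⟨filter_subset _ _, ((mem_BSet_iff hK1 hKN hs).1 hw).2⟩]
  refine sum_congr rfl fun S hS => ?_
  obtain ⟨hSi, hScard⟩ := mem_powersetCard.1 hS
  have hfiber : {w ∈ BSet s K i j | above w = S} =
      ({w | w i = j ∧ above w = S} : Finset (Fin N → Fin M)) := by
    ext w
    simp only [mem_filter, mem_univ, true_and, mem_BSet_iff hK1 hKN hs]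
    exact ⟨fun ⟨⟨hwi, _⟩, hw⟩ => ⟨hwi, hw⟩,
      fun ⟨hwi, hw⟩ => ⟨⟨hwi, (congrArg card hw).trans hScard⟩, hw⟩⟩
  rw [hfiber, card_filter_apply_eq_and_filter_eq (fun n m => s i j < s n m) i j hSi]
  congr 1 <;> refine prod_congr rfl fun n _ => ?_
  · simp [alpha]
  · have := card_filter_add_card_filter_not (s := univ) (fun m => s n m ≤ s i j)
    simp only [alpha, card_univ, Fintype.card_fin, not_le] at this ⊢
    omega
end

section
/- Suppose N ≥ 1 and all N·M similarity values s_{i,j} are pairwise distinct. Then for every i ∈ {1,…,N} and j ∈ {1,…,M}, the size of the boundary set for K = 1 satisfies |BSet(i,j;1)| = ∏_{n ∈ {1,…,N}, n ≠ i} α_{i,j}[n]. -/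
open Finset

/-- If `N ≥ 1` and all similarities are pairwise distinct, then for `K = 1`,
`|BSet(i,j;1)| = ∏_{n ≠ i} α_{i,j}[n]`. -/
theorem stmt2 (N M : ℕ) (hN : 1 ≤ N)
    (s : Fin N → Fin M → ℝ)
    (hs : Function.Injective fun p : Fin N × Fin M => s p.1 p.2)
    (i : Fin N) (j : Fin M) :
    (BSet s 1 i j).card = ∏ n ∈ Finset.univ.erase i, alpha s i j n := by
  classical
  have hne : ∀ n : Fin N, n ≠ i → ∀ m : Fin M, s n m ≠ s i j := by
    intro n hn m h
    exact hn (congrArg Prod.fst (hs (a₁ := (n, m)) (a₂ := (i, j)) h))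
  set t : Fin N → Finset (Fin M) :=
    fun n => if n = i then {j} else Finset.univ.filter fun m => s n m < s i j with ht
  have key : BSet s 1 i j = Fintype.piFinset t := by
    ext w
    simp only [BSet, topK, Finset.mem_filter, Finset.mem_univ, true_and,
      Fintype.mem_piFinset, ht]
    constructor
    · rintro ⟨hwi, htop, -⟩ n
      by_cases hn : n = i
      · subst hn; simp [hwi]
      · simp only [if_neg hn, Finset.mem_filter, Finset.mem_univ, true_and]
        by_contra hlt
        push_neg at hlt
        have hle : s i (w i) ≤ s n (w n) := by rw [hwi]; exact hlt
        have hsub : ({i, n} : Finset (Fin N)) ⊆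
            Finset.univ.filter fun i' => s i (w i) ≤ s i' (w i') := by
          intro x hx
          simp only [Finset.mem_insert, Finset.mem_singleton] at hx
          rcases hx with rfl | rfl
          · simp
          · simp [hle]
        have h2 : ({i, n} : Finset (Fin N)).card = 2 := by
          rw [Finset.card_insert_of_notMem (by simp [Ne.symm hn]), Finset.card_singleton]
        have := (Finset.card_le_card hsub).trans htop
        omega
    · intro h
      have hwi : w i = j := by
        have := h i; simpa using this
      have hlt : ∀ n : Fin N, n ≠ i → s n (w n) < s i j := by
        intro n hn
        have := h n
        simpa [if_neg hn] using this
      have hfilt : (Finset.univ.filter fun i' => s i (w i) ≤ s i' (w i')) = {i} := by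
        ext x
        simp only [Finset.mem_filter, Finset.mem_univ, true_and, Finset.mem_singleton]
        constructor
        · intro hx
          by_contra hxi
          exact absurd hx (not_le.mpr (by rw [hwi]; exact hlt x hxi))
        · rintro rfl; exact le_refl _
      refine ⟨hwi, ?_, ?_⟩
      · rw [hfilt]; simp
      · intro i' hi'
        by_cases hii : i' = i
        · subst hii; rw [hwi]
        · exfalso
          have hsub : ({i', i} : Finset (Fin N)) ⊆
              Finset.univ.filter fun x => s i' (w i') ≤ s x (w x) := by
            intro x hx
            simp only [Finset.mem_insert, Finset.mem_singleton] at hx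
            rcases hx with rfl | rfl
            · simp
            · simp only [Finset.mem_filter, Finset.mem_univ, true_and]
              rw [hwi]; exact le_of_lt (hlt i' hii)
          have h2 : ({i', i} : Finset (Fin N)).card = 2 := by
            rw [Finset.card_insert_of_notMem (by simp [hii]), Finset.card_singleton]
          have := (Finset.card_le_card hsub).trans hi'
          omega
  rw [key, Fintype.card_piFinset,
    ← Finset.mul_prod_erase Finset.univ (fun n => (t n).card) (Finset.mem_univ i)]
  have hti : (t i).card = 1 := by simp [ht]
  rw [hti, one_mul]
  refine Finset.prod_congr rfl ?_
  intro n hn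
  have hni : n ≠ i := (Finset.mem_erase.mp hn).1
  simp only [ht, if_neg hni, alpha]
  refine congrArg Finset.card (Finset.filter_congr ?_)
  intro m _
  exact ⟨le_of_lt, fun h => lt_of_le_of_ne h (hne n hni m)⟩
end

section
/- Suppose 1 ≤ K ≤ N and all N·M similarity values s_{i,j} are pairwise distinct. Fix i ∈ {1,…,N}, j ∈ {1,…,M}, and a label-tally vector γ with Σ_{l ∈ 𝒴} γ_l = K and γ_{y_i} ≥ 1. Then Support(i,j,γ) = ∏_{l ∈ 𝒴} N_l, where for each label l, with L_l = {n ∈ {1,…,N} : y_n = l and n ≠ i}, N_l = Σ_S ∏_{n ∈ S} (M − α_{i,j}[n]) · ∏_{n ∈ L_l \ S} α_{i,j}[n], the sum ranging over all subsets S ⊆ L_l of size γ_l − 1 if l = y_i and of size γ_l otherwise. -/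
open Finset

/-- The label tally of a possible world `w`: for each label `l`, the number of indices in
`Top(K, w)` with label `l`. -/
noncomputable def labelTally {N M : ℕ} {Y : Type*} [DecidableEq Y]
    (s : Fin N → Fin M → ℝ) (K : ℕ) (y : Fin N → Y) (w : Fin N → Fin M) : Y → ℕ :=
  fun l => ((topK s K w).filter fun n => y n = l).card

/-- `Support(i, j, γ)`: the number of possible worlds in `BSet(i,j;K)` whose label tally
is exactly `γ`. -/
noncomputable def support {N M : ℕ} {Y : Type*} [Fintype Y] [DecidableEq Y]
    (s : Fin N → Fin M → ℝ) (K : ℕ) (y : Fin N → Y) (i : Fin N) (j : Fin M)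
    (γ : Y → ℕ) : ℕ :=
  ((BSet s K i j).filter fun w => labelTally s K y w = γ).card

private lemma char_lemma {N M : ℕ} {Y : Type*} [Fintype Y] [DecidableEq Y]
    (K : ℕ) (y : Fin N → Y) (s : Fin N → Fin M → ℝ)
    (hs : Function.Injective fun p : Fin N × Fin M => s p.1 p.2)
    (i : Fin N) (j : Fin M) (γ : Y → ℕ)
    (hγK : ∑ l : Y, γ l = K) (hγy : 1 ≤ γ (y i)) (w : Fin N → Fin M) :
    (w ∈ BSet s K i j ∧ labelTally s K y w = γ) ↔
      (w i = j ∧ ∀ l : Y,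
        ((Finset.univ.filter fun n : Fin N => y n = l ∧ n ≠ i).filter
          fun n => s i j < s n (w n)).card = if l = y i then γ l - 1 else γ l) := by
  classical
  by_cases hwi : w i = j
  swap
  · simp [BSet, hwi]
  have hdist : ∀ n : Fin N, n ≠ i → s n (w n) ≠ s i j := by
    intro n hn h
    exact hn (congrArg Prod.fst (hs (a₁ := (n, w n)) (a₂ := (i, j)) h))
  set T : Finset (Fin N) := (Finset.univ.erase i).filter fun n => s i j < s n (w n) with hT
  have hiT : i ∉ T := fun h => (Finset.mem_erase.1 (Finset.mem_filter.1 h).1).1 rfl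
  have hcard_insert : (insert i T).card = T.card + 1 := Finset.card_insert_of_notMem hiT
  have hRi : (Finset.univ.filter fun i' => s i j ≤ s i' (w i')) = insert i T := by
    ext n
    simp only [Finset.mem_filter, Finset.mem_univ, true_and, Finset.mem_insert, hT,
      Finset.mem_erase, and_true]
    by_cases hn : n = i
    · subst hn; simp [hwi]
    · have hne := hdist n hn
      constructor
      · intro h; exact Or.inr ⟨hn, lt_of_le_of_ne h (Ne.symm hne)⟩
      · rintro (h | h)
        · exact absurd h hn
        · exact le_of_lt h.2
  have htop : ∀ n, n ∈ topK s K w ↔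
      (Finset.univ.filter fun i' => s n (w n) ≤ s i' (w i')).card ≤ K := by
    intro n; simp [topK]
  have hmono : ∀ n ∈ insert i T,
      (Finset.univ.filter fun i' => s n (w n) ≤ s i' (w i')) ⊆ insert i T := by
    intro n hn
    have hsn : s i j ≤ s n (w n) := by
      rcases Finset.mem_insert.1 hn with h | h
      · subst h; rw [hwi]
      · exact le_of_lt (Finset.mem_filter.1 h).2
    intro m hm
    rw [← hRi]
    exact Finset.mem_filter.2 ⟨Finset.mem_univ m, le_trans hsn (Finset.mem_filter.1 hm).2⟩
  have hsubtop : T.card + 1 ≤ K → insert i T ⊆ topK s K w := by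
    intro hK n hn
    rw [htop n]
    calc (Finset.univ.filter fun i' => s n (w n) ≤ s i' (w i')).card
        ≤ (insert i T).card := Finset.card_le_card (hmono n hn)
      _ ≤ K := by rw [hcard_insert]; exact hK
  have hcnteq : ∀ l : Y,
      ((Finset.univ.filter fun n : Fin N => y n = l ∧ n ≠ i).filter
        fun n => s i j < s n (w n)) = T.filter fun n => y n = l := by
    intro l
    ext n
    simp only [hT, Finset.mem_filter, Finset.mem_erase, Finset.mem_univ, true_and, and_true]
    tauto
  have htally : topK s K w = insert i T → ∀ l : Y,
      labelTally s K y w l = (T.filter fun n => y n = l).card + (if l = y i then 1 else 0) := by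
    intro heq l
    unfold labelTally
    rw [heq, Finset.filter_insert]
    by_cases hl : l = y i
    · rw [if_pos hl, if_pos hl.symm, Finset.card_insert_of_notMem
        (fun h => hiT (Finset.mem_of_mem_filter i h))]
    · rw [if_neg hl, if_neg (fun h => hl h.symm)]; omega
  constructor
  · rintro ⟨hw, hγ⟩
    obtain ⟨-, hitop, hmin⟩ := (Finset.mem_filter.1 hw).2
    have h1 : T.card + 1 ≤ K := by
      have h := (htop i).1 hitop
      rw [hwi, hRi, hcard_insert] at h
      exact h
    have hsub2 : topK s K w ⊆ insert i T := by
      intro n hn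
      rw [← hRi]
      exact Finset.mem_filter.2 ⟨Finset.mem_univ n, hmin n hn⟩
    have heq : topK s K w = insert i T := Finset.Subset.antisymm hsub2 (hsubtop h1)
    refine ⟨hwi, fun l => ?_⟩
    have ht := htally heq l
    have hγl : labelTally s K y w l = γ l := congrFun hγ l
    rw [hcnteq l]
    by_cases hl : l = y i
    · rw [if_pos hl]; rw [hγl, if_pos hl] at ht; omega
    · rw [if_neg hl]; rw [hγl, if_neg hl] at ht; omega
  · rintro ⟨-, hcnt⟩
    have hTcard : T.card + 1 = K := by
      have h1 : T.card = ∑ l : Y, (if l = y i then γ l - 1 else γ l) := by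
        rw [Finset.card_eq_sum_card_fiberwise (f := y) (t := Finset.univ)
          (fun x _ => Finset.mem_univ _)]
        exact Finset.sum_congr rfl fun l _ => by rw [← hcnt l, hcnteq l]
      have h2 : γ (y i) + ∑ l ∈ Finset.univ.erase (y i), γ l = K := by
        rw [Finset.add_sum_erase _ γ (Finset.mem_univ _), hγK]
      have h3 : (∑ l : Y, (if l = y i then γ l - 1 else γ l))
          = (γ (y i) - 1) + ∑ l ∈ Finset.univ.erase (y i), γ l := by
        rw [← Finset.add_sum_erase _ _ (Finset.mem_univ (y i)), if_pos rfl]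
        congr 1
        refine Finset.sum_congr rfl fun l hl => ?_
        rw [if_neg (Finset.ne_of_mem_erase hl)]
      omega
    have hsub1 : insert i T ⊆ topK s K w := hsubtop (le_of_eq hTcard)
    have hsub2 : topK s K w ⊆ insert i T := by
      intro n hn
      by_contra hnmem
      have hni : n ≠ i := fun h => hnmem (h ▸ Finset.mem_insert_self i T)
      have hlt : s n (w n) < s i j := by
        have hnot : ¬ s i j < s n (w n) := fun h => hnmem (Finset.mem_insert.2 (Or.inr
          (Finset.mem_filter.2 ⟨Finset.mem_erase.2 ⟨hni, Finset.mem_univ n⟩, h⟩)))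
        exact lt_of_le_of_ne (not_lt.1 hnot) (hdist n hni)
      have hsup : insert n (insert i T) ⊆
          Finset.univ.filter fun i' => s n (w n) ≤ s i' (w i') := by
        intro m hm
        rcases Finset.mem_insert.1 hm with h | h
        · subst h; exact Finset.mem_filter.2 ⟨Finset.mem_univ _, le_refl _⟩
        · refine Finset.mem_filter.2 ⟨Finset.mem_univ _, le_of_lt (lt_of_lt_of_le hlt ?_)⟩
          rcases Finset.mem_insert.1 h with h' | h'
          · subst h'; rw [hwi]
          · exact le_of_lt (Finset.mem_filter.1 h').2
      have hc := Finset.card_le_card hsup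
      rw [Finset.card_insert_of_notMem hnmem, hcard_insert, hTcard] at hc
      have hn2 := (htop n).1 hn
      omega
    have heq : topK s K w = insert i T := Finset.Subset.antisymm hsub2 hsub1
    refine ⟨Finset.mem_filter.2 ⟨Finset.mem_univ w, hwi, ?_, ?_⟩, ?_⟩
    · rw [heq]; exact Finset.mem_insert_self i T
    · intro i' hi'
      rw [heq] at hi'
      rcases Finset.mem_insert.1 hi' with h | h
      · subst h; rw [hwi]
      · exact le_of_lt (Finset.mem_filter.1 h).2
    · funext l
      have ht := htally heq l
      have hc := hcnt l
      rw [hcnteq l] at hc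
      rw [ht, hc]
      by_cases hl : l = y i
      · rw [if_pos hl, if_pos hl]; subst hl; omega
      · rw [if_neg hl, if_neg hl]; omega

/-- If `1 ≤ K ≤ N`, all similarities are pairwise distinct, and `γ` is a
label-tally vector with `Σ_l γ_l = K` and `γ_{y i} ≥ 1`, then
`Support(i,j,γ) = ∏_{l ∈ 𝒴} N_l`, where, with `L_l = {n : y n = l, n ≠ i}`,
`N_l = Σ_S ∏_{n ∈ S} (M − α_{i,j}[n]) · ∏_{n ∈ L_l \ S} α_{i,j}[n]`, summing over the
subsets `S ⊆ L_l` of size `γ_l − 1` if `l = y i` and of size `γ_l` otherwise. -/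
theorem stmt3 (N M K : ℕ) (hK1 : 1 ≤ K) (hKN : K ≤ N)
    {Y : Type*} [Fintype Y] [DecidableEq Y] (y : Fin N → Y)
    (s : Fin N → Fin M → ℝ)
    (hs : Function.Injective fun p : Fin N × Fin M => s p.1 p.2)
    (i : Fin N) (j : Fin M) (γ : Y → ℕ)
    (hγK : ∑ l : Y, γ l = K) (hγy : 1 ≤ γ (y i)) :
    support s K y i j γ =
      ∏ l : Y,
        ∑ S ∈ (Finset.univ.filter fun n : Fin N => y n = l ∧ n ≠ i).powersetCard
            (if l = y i then γ l - 1 else γ l),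
          (∏ n ∈ S, (M - alpha s i j n)) *
            ∏ n ∈ (Finset.univ.filter fun n : Fin N => y n = l ∧ n ≠ i) \ S,
              alpha s i j n := by
  classical
  have hdist : ∀ n : Fin N, n ≠ i → ∀ m : Fin M, s n m ≠ s i j := by
    intro n hn m h
    exact hn (congrArg Prod.fst (hs (a₁ := (n, m)) (a₂ := (i, j)) h))
  have halt : ∀ n : Fin N, n ≠ i →
      (Finset.univ.filter fun m => s n m < s i j).card = alpha s i j n := by
    intro n hn
    unfold alpha
    congr 1
    ext m
    simp only [Finset.mem_filter, Finset.mem_univ, true_and]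
    exact ⟨le_of_lt, fun h => lt_of_le_of_ne h (hdist n hn m)⟩
  have hagt : ∀ n : Fin N, n ≠ i →
      (Finset.univ.filter fun m => s i j < s n m).card = M - alpha s i j n := by
    intro n hn
    have h1 := Finset.card_filter_add_card_filter_not
      (s := (Finset.univ : Finset (Fin M))) (p := fun m => s n m ≤ s i j)
    have h2 : (Finset.univ.filter fun m => ¬ s n m ≤ s i j)
        = Finset.univ.filter fun m => s i j < s n m := by
      simp only [not_le]
    rw [h2, Finset.card_univ, Fintype.card_fin] at h1
    unfold alpha
    omega
  have h1 : support s K y i j γ = (Finset.univ.filter fun w : Fin N → Fin M =>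
      w i = j ∧ ∀ l : Y, ((Finset.univ.filter fun n : Fin N => y n = l ∧ n ≠ i).filter
        fun n => s i j < s n (w n)).card = if l = y i then γ l - 1 else γ l).card := by
    unfold support
    congr 1
    ext w
    simp only [Finset.mem_filter, Finset.mem_univ, true_and]
    exact char_lemma K y s hs i j γ hγK hγy w
  have hLsub : ∀ l : Y,
      (Finset.univ.filter fun n : Fin N => y n = l ∧ n ≠ i) ⊆ Finset.univ.erase i := by
    intro l n hn
    exact Finset.mem_erase.2 ⟨(Finset.mem_filter.1 hn).2.2, Finset.mem_univ n⟩
  have hdisjL : ∀ l l' : Y, l ≠ l' →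
      Disjoint (Finset.univ.filter fun n : Fin N => y n = l ∧ n ≠ i)
        (Finset.univ.filter fun n : Fin N => y n = l' ∧ n ≠ i) := by
    intro l l' hne
    refine Finset.disjoint_left.2 fun n h1 h2 => hne ?_
    rw [← (Finset.mem_filter.1 h1).2.1, (Finset.mem_filter.1 h2).2.1]
  have hUeq : (Finset.univ.erase i : Finset (Fin N)) =
      Finset.univ.biUnion (fun l : Y => Finset.univ.filter fun n : Fin N => y n = l ∧ n ≠ i) := by
    ext n
    simp only [Finset.mem_erase, Finset.mem_univ, and_true, Finset.mem_biUnion,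
      Finset.mem_filter, true_and]
    exact ⟨fun h => ⟨y n, rfl, h⟩, fun ⟨l, _, h⟩ => h⟩
  have hkey : ∀ x : Y → Finset (Fin N),
      (∀ l, x l ⊆ Finset.univ.filter fun n : Fin N => y n = l ∧ n ≠ i) →
      ∀ l : Y, (Finset.univ.filter fun n : Fin N => y n = l ∧ n ≠ i) ∩ Finset.univ.biUnion x
        = x l := by
    intro x hx l
    ext n
    simp only [Finset.mem_inter, Finset.mem_biUnion, Finset.mem_univ, true_and]
    constructor
    · rintro ⟨hnL, l', hn'⟩
      have hy' : y n = l' := (Finset.mem_filter.1 (hx l' hn')).2.1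
      have hy : y n = l := (Finset.mem_filter.1 hnL).2.1
      rwa [show l' = l by rw [← hy', hy]] at hn'
    · intro hn
      exact ⟨hx l hn, l, hn⟩
  have hLintw : ∀ (w : Fin N → Fin M) (l : Y),
      (Finset.univ.filter fun n : Fin N => y n = l ∧ n ≠ i) ∩
          ((Finset.univ.erase i).filter fun n => s i j < s n (w n))
      = (Finset.univ.filter fun n : Fin N => y n = l ∧ n ≠ i).filter
          fun n => s i j < s n (w n) := by
    intro w l
    ext n
    simp only [Finset.mem_inter, Finset.mem_filter, Finset.mem_erase, Finset.mem_univ,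
      true_and, and_true]
    tauto
  set 𝒯 : Finset (Finset (Fin N)) := ((Finset.univ.erase i).powerset).filter
    fun Tt : Finset (Fin N) => ∀ l : Y,
      ((Finset.univ.filter fun n : Fin N => y n = l ∧ n ≠ i) ∩ Tt).card
        = if l = y i then γ l - 1 else γ l with h𝒯
  have hmap : ∀ w ∈ (Finset.univ.filter fun w : Fin N → Fin M =>
      w i = j ∧ ∀ l : Y, ((Finset.univ.filter fun n : Fin N => y n = l ∧ n ≠ i).filter
        fun n => s i j < s n (w n)).card = if l = y i then γ l - 1 else γ l),
      ((Finset.univ.erase i).filter fun n => s i j < s n (w n)) ∈ 𝒯 := by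
    intro w hw
    obtain ⟨-, hwP⟩ := Finset.mem_filter.1 hw
    refine Finset.mem_filter.2 ⟨Finset.mem_powerset.2 (Finset.filter_subset _ _), fun l => ?_⟩
    rw [hLintw w l]
    exact hwP.2 l
  rw [h1, Finset.card_eq_sum_card_fiberwise hmap, Finset.prod_univ_sum]
  refine Finset.sum_nbij'
    (fun Tt => fun l : Y => (Finset.univ.filter fun n : Fin N => y n = l ∧ n ≠ i) ∩ Tt)
    (fun x => Finset.univ.biUnion x) ?_ ?_ ?_ ?_ ?_
  · intro Tt hTt
    obtain ⟨-, hTcnt⟩ := Finset.mem_filter.1 hTt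
    rw [Fintype.mem_piFinset]
    intro l
    exact Finset.mem_powersetCard.2 ⟨Finset.inter_subset_left, hTcnt l⟩
  · intro x hx
    rw [Fintype.mem_piFinset] at hx
    have hxsub : ∀ l, x l ⊆ Finset.univ.filter fun n : Fin N => y n = l ∧ n ≠ i :=
      fun l => (Finset.mem_powersetCard.1 (hx l)).1
    refine Finset.mem_filter.2 ⟨Finset.mem_powerset.2 ?_, fun l => ?_⟩
    · intro n hn
      obtain ⟨l, -, hnl⟩ := Finset.mem_biUnion.1 hn
      exact hLsub l (hxsub l hnl)
    · rw [hkey x hxsub l]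
      exact (Finset.mem_powersetCard.1 (hx l)).2
  · intro Tt hTt
    obtain ⟨hTsub', -⟩ := Finset.mem_filter.1 hTt
    have hTsub := Finset.mem_powerset.1 hTsub'
    ext n
    simp only [Finset.mem_biUnion, Finset.mem_univ, true_and, Finset.mem_inter]
    constructor
    · rintro ⟨l, -, hn⟩
      exact hn
    · intro hn
      have hni : n ≠ i := (Finset.mem_erase.1 (hTsub hn)).1
      exact ⟨y n, Finset.mem_filter.2 ⟨Finset.mem_univ n, rfl, hni⟩, hn⟩
  · intro x hx
    rw [Fintype.mem_piFinset] at hx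
    funext l
    exact hkey x (fun l' => (Finset.mem_powersetCard.1 (hx l')).1) l
  · intro Tt hTt
    obtain ⟨hTsub', hTcnt⟩ := Finset.mem_filter.1 hTt
    have hTsub := Finset.mem_powerset.1 hTsub'
    have hiTt : i ∉ Tt := fun h => (Finset.mem_erase.1 (hTsub h)).1 rfl
    have hfib : ((Finset.univ.filter fun w : Fin N → Fin M =>
        w i = j ∧ ∀ l : Y, ((Finset.univ.filter fun n : Fin N => y n = l ∧ n ≠ i).filter
          fun n => s i j < s n (w n)).card = if l = y i then γ l - 1 else γ l).filter
        fun w => ((Finset.univ.erase i).filter fun n => s i j < s n (w n)) = Tt)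
        = Fintype.piFinset (fun n : Fin N => if n = i then ({j} : Finset (Fin M))
            else if n ∈ Tt then Finset.univ.filter (fun m => s i j < s n m)
            else Finset.univ.filter (fun m => s n m < s i j)) := by
      ext w
      simp only [Fintype.mem_piFinset, Finset.mem_filter, Finset.mem_univ, true_and]
      constructor
      · rintro ⟨⟨hwi, -⟩, hTw⟩ n
        by_cases hn : n = i
        · subst hn; rw [if_pos rfl]; simp [hwi]
        · rw [if_neg hn]
          by_cases hnT : n ∈ Tt
          · rw [if_pos hnT]
            have hmem : n ∈ (Finset.univ.erase i).filter fun n => s i j < s n (w n) :=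
              hTw ▸ hnT
            exact Finset.mem_filter.2 ⟨Finset.mem_univ _, (Finset.mem_filter.1 hmem).2⟩
          · rw [if_neg hnT]
            have hnot : ¬ s i j < s n (w n) := fun h => hnT (hTw ▸ Finset.mem_filter.2
              ⟨Finset.mem_erase.2 ⟨hn, Finset.mem_univ n⟩, h⟩)
            exact Finset.mem_filter.2 ⟨Finset.mem_univ _,
              lt_of_le_of_ne (not_lt.1 hnot) (hdist n hn (w n))⟩
      · intro h
        have hwi : w i = j := by
          have hi := h i
          rw [if_pos rfl] at hi
          simpa using hi
        have hTw : ((Finset.univ.erase i).filter fun n => s i j < s n (w n)) = Tt := by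
          ext n
          by_cases hn : n = i
          · subst hn
            exact iff_of_false
              (fun hh => (Finset.mem_erase.1 (Finset.mem_of_mem_filter n hh)).1 rfl) hiTt
          · have hcn := h n
            rw [if_neg hn] at hcn
            by_cases hnT : n ∈ Tt
            · rw [if_pos hnT] at hcn
              exact iff_of_true (Finset.mem_filter.2 ⟨Finset.mem_erase.2
                ⟨hn, Finset.mem_univ n⟩, (Finset.mem_filter.1 hcn).2⟩) hnT
            · rw [if_neg hnT] at hcn
              exact iff_of_false (fun hh => absurd (Finset.mem_filter.1 hh).2
                (not_lt.2 (le_of_lt (Finset.mem_filter.1 hcn).2))) hnT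
        refine ⟨⟨hwi, fun l => ?_⟩, hTw⟩
        rw [← hLintw w l, hTw]
        exact hTcnt l
    rw [hfib, Fintype.card_piFinset]
    rw [← Finset.mul_prod_erase Finset.univ _ (Finset.mem_univ i), if_pos rfl,
      Finset.card_singleton, one_mul]
    have hstep : ∀ n ∈ Finset.univ.erase i,
        ((if n = i then ({j} : Finset (Fin M))
          else if n ∈ Tt then Finset.univ.filter (fun m => s i j < s n m)
          else Finset.univ.filter (fun m => s n m < s i j)).card)
        = (if n ∈ Tt then M - alpha s i j n else alpha s i j n) := by
      intro n hn
      have hni : n ≠ i := (Finset.mem_erase.1 hn).1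
      rw [if_neg hni]
      by_cases hnT : n ∈ Tt
      · rw [if_pos hnT, if_pos hnT, hagt n hni]
      · rw [if_neg hnT, if_neg hnT, halt n hni]
    rw [Finset.prod_congr rfl hstep, hUeq,
      Finset.prod_biUnion (fun l _ l' _ hll' => hdisjL l l' hll')]
    refine Finset.prod_congr rfl fun l _ => ?_
    have hSsub : ((Finset.univ.filter fun n : Fin N => y n = l ∧ n ≠ i) ∩ Tt)
        ⊆ (Finset.univ.filter fun n : Fin N => y n = l ∧ n ≠ i) := Finset.inter_subset_left
    conv_lhs => rw [← Finset.union_sdiff_of_subset hSsub]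
    rw [Finset.prod_union Finset.disjoint_sdiff]
    congr 1
    · exact Finset.prod_congr rfl fun n hn => if_pos (Finset.mem_inter.1 hn).2
    · exact Finset.prod_congr rfl fun n hn => if_neg (fun h =>
        (Finset.mem_sdiff.1 hn).2 (Finset.mem_inter.2 ⟨(Finset.mem_sdiff.1 hn).1, h⟩))
end

section
/- Fix i ∈ {1,…,N}, j ∈ {1,…,M}, and a label l ∈ 𝒴. For integers c ≥ 0 and 0 ≤ n ≤ N, define C_l(c,n) = Σ_S ∏_{n' ∈ S} (M − α_{i,j}[n']) · ∏_{n' ∈ L_l(n) \ S} α_{i,j}[n'], where L_l(n) = {n' ∈ {1,…,n} : y_{n'} = l and n' ≠ i} and the sum ranges over subsets S ⊆ L_l(n) of size c − 1 if (l = y_i and i ≤ n) and of size c otherwise (with C_l(c,n) = 0 when this required size is negative or exceeds |L_l(n)|). Then C_l satisfies the recurrence: C_l(c,0) = 1 if c = 0 and C_l(c,0) = 0 if c > 0; for 1 ≤ n ≤ N, C_l(c,n) = C_l(c,n−1) if y_n ≠ l; C_l(c,n) = C_l(c−1,n−1) if n = i and y_i = l; and C_l(c,n) = α_{i,j}[n]·C_l(c,n−1)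 + (M − α_{i,j}[n])·C_l(c−1,n−1) if y_n = l and n ≠ i (with the convention C_l(−1,n) = 0). -/
open Finset

/-- `L_l(n)`: the set of indices `n'` among the first `n` indices with label `l` that are
different from `i`. -/
def labelSet {N : ℕ} {Y : Type*} [DecidableEq Y] (y : Fin N → Y) (i : Fin N) (l : Y)
    (n : ℕ) : Finset (Fin N) :=
  Finset.univ.filter fun n' : Fin N => (n' : ℕ) < n ∧ y n' = l ∧ n' ≠ i

/-- The closed-form quantity `C_l(c, n)`:
`C_l(c,n) = Σ_S ∏_{n' ∈ S} (M − α_{i,j}[n']) · ∏_{n' ∈ L_l(n) \ S} α_{i,j}[n']` where the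
sum is over subsets `S ⊆ L_l(n)` of size `c − 1` if (`l = y i` and `i` is among the first
`n` indices) and of size `c` otherwise, with the value `0` when the required size is
negative (i.e. `c = 0` in the first case; sums over `powersetCard` already vanish when the
required size exceeds `|L_l(n)|`). -/
noncomputable def DPC {N M : ℕ} {Y : Type*} [DecidableEq Y]
    (s : Fin N → Fin M → ℝ) (y : Fin N → Y) (i : Fin N) (j : Fin M) (l : Y)
    (c n : ℕ) : ℕ :=
  if l = y i ∧ (i : ℕ) < n then
    if c = 0 then 0
    else
      ∑ S ∈ (labelSet y i l n).powersetCard (c - 1),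
        (∏ n' ∈ S, (M - alpha s i j n')) * ∏ n' ∈ labelSet y i l n \ S, alpha s i j n'
  else
    ∑ S ∈ (labelSet y i l n).powersetCard c,
      (∏ n' ∈ S, (M - alpha s i j n')) * ∏ n' ∈ labelSet y i l n \ S, alpha s i j n'


section helpers
variable {β : Type*} [DecidableEq β] (f g : β → ℕ)

lemma sum_insert_key {a : β} {t : Finset β} (ha : a ∉ t) (c : ℕ) :
    ∑ S ∈ (insert a t).powersetCard c, (∏ n' ∈ S, f n') * ∏ n' ∈ insert a t \ S, g n' =
      g a * ∑ S ∈ t.powersetCard c, (∏ n' ∈ S, f n') * ∏ n' ∈ t \ S, g n' +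
      f a * (if c = 0 then 0 else
        ∑ S ∈ t.powersetCard (c - 1), (∏ n' ∈ S, f n') * ∏ n' ∈ t \ S, g n') := by
  cases c with
  | zero =>
    simp only [powersetCard_zero, sum_singleton, prod_empty, sdiff_empty, one_mul,
      if_pos rfl, mul_zero, add_zero]
    rw [Finset.prod_insert ha, mul_comm]
    simp
  | succ c =>
    rw [powersetCard_succ_insert ha]
    rw [Finset.sum_union]
    · congr 1
      · rw [Finset.mul_sum]
        refine Finset.sum_congr rfl fun S hS => ?_
        have hST : S ⊆ t := (mem_powersetCard.1 hS).1
        have haS : a ∉ S := fun h => ha (hST h)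
        have : insert a t \ S = insert a (t \ S) := by
          rw [insert_sdiff_of_notMem _ haS]
        rw [this, Finset.prod_insert (by simp [ha])]
        ring
      · simp only [Nat.succ_ne_zero, if_false, Nat.succ_sub_one]
        rw [Finset.sum_image, Finset.mul_sum]
        · refine Finset.sum_congr rfl fun S hS => ?_
          have hST : S ⊆ t := (mem_powersetCard.1 hS).1
          have haS : a ∉ S := fun h => ha (hST h)
          have hd : insert a t \ insert a S = t \ S := by
            ext x
            simp only [mem_sdiff, mem_insert, not_or]
            constructor
            · rintro ⟨hx | hx, hx1, hx2⟩
              · exact absurd hx1 (not_not_intro hx)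
              · exact ⟨hx, hx2⟩
            · rintro ⟨hx, hx2⟩
              exact ⟨Or.inr hx, fun he => ha (he ▸ hx), hx2⟩
          rw [Finset.prod_insert haS, hd]
          ring
        · intro S hS S' hS' h
          have haS : a ∉ S := fun hh => ha ((mem_powersetCard.1 hS).1 hh)
          have haS' : a ∉ S' := fun hh => ha ((mem_powersetCard.1 hS').1 hh)
          rw [← Finset.erase_insert haS, ← Finset.erase_insert haS', h]
    · rw [Finset.disjoint_left]
      intro S hS hS'
      have hST : S ⊆ t := (mem_powersetCard.1 hS).1
      obtain ⟨S', hS', rfl⟩ := Finset.mem_image.1 hS'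
      exact ha (hST (mem_insert_self _ _))
end helpers

section labelset
variable {N : ℕ} {Y : Type*} [DecidableEq Y] (y : Fin N → Y) (i : Fin N) (l : Y)

lemma labelSet_succ_of_ne (n : Fin N) (h : ¬(y n = l ∧ n ≠ i)) :
    labelSet y i l ((n : ℕ) + 1) = labelSet y i l (n : ℕ) := by
  ext n'
  simp only [labelSet, mem_filter, mem_univ, true_and, Nat.lt_succ_iff_lt_or_eq]
  constructor
  · rintro ⟨hlt | heq, h1, h2⟩
    · exact ⟨hlt, h1, h2⟩
    · exact absurd ⟨Fin.ext heq ▸ h1, Fin.ext heq ▸ h2⟩ h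
  · rintro ⟨hlt, h1, h2⟩
    exact ⟨Or.inl hlt, h1, h2⟩

lemma labelSet_succ_insert (n : Fin N) (h1 : y n = l) (h2 : n ≠ i) :
    labelSet y i l ((n : ℕ) + 1) = insert n (labelSet y i l (n : ℕ)) := by
  ext n'
  simp only [labelSet, mem_filter, mem_univ, true_and, Nat.lt_succ_iff_lt_or_eq, mem_insert]
  constructor
  · rintro ⟨hlt | heq, ha, hb⟩
    · exact Or.inr ⟨hlt, ha, hb⟩
    · exact Or.inl (Fin.ext heq)
  · rintro (rfl | ⟨hlt, ha, hb⟩)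
    · exact ⟨Or.inr rfl, h1, h2⟩
    · exact ⟨Or.inl hlt, ha, hb⟩

lemma notMem_labelSet_self (n : Fin N) : n ∉ labelSet y i l (n : ℕ) := by
  simp [labelSet]

end labelset

/-- The closed-form quantity `C_l` satisfies the dynamic-programming
recurrence: `C_l(0,0) = 1`; `C_l(c,0) = 0` for `c > 0`; for a step from `n` to `n+1`:
if `y n ≠ l` then `C_l(c,n+1) = C_l(c,n)`; if `n = i` and `y i = l` then
`C_l(c,n+1) = C_l(c−1,n)` (with the convention `C_l(−1,n) = 0`); and if `y n = l`, `n ≠ i`,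
then `C_l(c,n+1) = α_{i,j}[n]·C_l(c,n) + (M − α_{i,j}[n])·C_l(c−1,n)` (same convention). -/
theorem stmt4 (N M : ℕ)
    (s : Fin N → Fin M → ℝ)
    (hs : Function.Injective fun p : Fin N × Fin M => s p.1 p.2)
    {Y : Type*} [DecidableEq Y] (y : Fin N → Y) (i : Fin N) (j : Fin M) (l : Y) :
    DPC s y i j l 0 0 = 1 ∧
    (∀ c : ℕ, 0 < c → DPC s y i j l c 0 = 0) ∧
    (∀ (c : ℕ) (n : Fin N), y n ≠ l →
      DPC s y i j l c ((n : ℕ) + 1) = DPC s y i j l c (n : ℕ)) ∧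
    (∀ (c : ℕ) (n : Fin N), n = i → y i = l →
      DPC s y i j l c ((n : ℕ) + 1) =
        if c = 0 then 0 else DPC s y i j l (c - 1) (n : ℕ)) ∧
    (∀ (c : ℕ) (n : Fin N), y n = l → n ≠ i →
      DPC s y i j l c ((n : ℕ) + 1) =
        alpha s i j n * DPC s y i j l c (n : ℕ) +
          (M - alpha s i j n) * (if c = 0 then 0 else DPC s y i j l (c - 1) (n : ℕ))) := by
  refine ⟨?_, ?_, ?_, ?_, ?_⟩
  · have h0 : labelSet y i l 0 = (∅ : Finset (Fin N)) := by simp [labelSet]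
    simp [DPC, h0]
  · intro c hc
    have h0 : labelSet y i l 0 = (∅ : Finset (Fin N)) := by simp [labelSet]
    rw [DPC, if_neg (by simp), h0]
    rw [Finset.powersetCard_eq_empty.2 (by simpa using hc)]
    simp
  · intro c n hy
    have hL := labelSet_succ_of_ne y i l n (fun h => hy h.1)
    have hcond : (l = y i ∧ (i : ℕ) < (n : ℕ) + 1) ↔ (l = y i ∧ (i : ℕ) < (n : ℕ)) := by
      constructor
      · rintro ⟨rfl, hlt⟩
        refine ⟨rfl, ?_⟩
        have : (i : ℕ) ≠ (n : ℕ) := fun h => hy (congrArg y (Fin.val_injective h).symm)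
        omega
      · rintro ⟨h1, h2⟩
        exact ⟨h1, by omega⟩
    rw [DPC, DPC]
    simp only [hcond, hL]
  · intro c n hn hyl
    subst hn
    have hL := labelSet_succ_of_ne y n l n (fun h => h.2 rfl)
    rw [DPC, if_pos ⟨hyl.symm, Nat.lt_succ_self _⟩, hL]
    by_cases hc : c = 0
    · simp [hc]
    · rw [if_neg hc, if_neg hc, DPC, if_neg (by simp)]
  · intro c n hyn hni
    have hL := labelSet_succ_insert y i l n hyn hni
    have hmem := notMem_labelSet_self y i l n
    have hcond : (l = y i ∧ (i : ℕ) < (n : ℕ) + 1) ↔ (l = y i ∧ (i : ℕ) < (n : ℕ)) := by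
      constructor
      · rintro ⟨h1, hlt⟩
        refine ⟨h1, ?_⟩
        have : (i : ℕ) ≠ (n : ℕ) := fun h => hni (Fin.val_injective h.symm)
        omega
      · rintro ⟨h1, h2⟩
        exact ⟨h1, by omega⟩
    by_cases hcceq : l = y i ∧ (i : ℕ) < (n : ℕ)
    · -- condition true on both sides
      cases c with
      | zero =>
        rw [DPC, if_pos (hcond.2 hcceq), if_pos rfl]
        rw [DPC, if_pos hcceq, if_pos rfl]
        simp
      | succ c =>
        rw [DPC, if_pos (hcond.2 hcceq), if_neg (Nat.succ_ne_zero c), Nat.succ_sub_one, hL,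
          sum_insert_key _ _ hmem]
        rw [DPC, if_pos hcceq, if_neg (Nat.succ_ne_zero c), Nat.succ_sub_one]
        rw [DPC, if_pos hcceq]
        simp
    · -- condition false on both sides
      rw [DPC, if_neg (fun h => hcceq (hcond.1 h)), hL, sum_insert_key _ _ hmem]
      rw [DPC, if_neg hcceq]
      congr 1
      by_cases hc : c = 0
      · simp [hc]
      · rw [if_neg hc, if_neg hc, DPC, if_neg hcceq]
end

section
/- Suppose N ≥ 1, K = 1, and all N·M similarity values s_{i,j} are pairwise distinct. Then for every label l ∈ 𝒴, the number of possible worlds whose 1-NN prediction is l equals Σ_{i : y_i = l} Σ_{j=1}^M ∏_{n ∈ {1,…,N}, n ≠ i} α_{i,j}[n]. -/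
/-
Sort the worlds by their 1-NN winner: a world has at most one strict similarity maximiser,
so the worlds predicting `l` split disjointly according to the winning candidate `(i, j)`
with `y i = l`. The worlds won by `(i, j)` are those choosing `j` in the `i`-th set and, in
every other set `n`, a candidate strictly less similar than `s i j`; by distinctness there are
exactly `α_{i,j}[n]` such candidates, independently for each `n`.
-/

open Finset

lemma eq_of_forall_ne_lt {ι α : Type*} [LinearOrder α] {v : ι → α} {i k : ι}
    (hi : ∀ i' ≠ i, v i' < v i) (hk : ∀ k' ≠ k, v k' < v k) : i = k := by
  by_contra hik
  exact lt_asymm (hi k (Ne.symm hik)) (hk i hik)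

lemma card_filter_exists_eq_sum_of_unique {ι β : Type*} [Fintype ι] [Fintype β]
    [DecidableEq β] (q : ι → Prop) [DecidablePred q] (P : ι → β → Prop)
    [∀ i, DecidablePred (P i)] [DecidablePred fun b => ∃ i, q i ∧ P i b]
    (huniq : ∀ b i k, P i b → P k b → i = k) :
    #{b | ∃ i, q i ∧ P i b} = ∑ i with q i, #{b | P i b} := by
  rw [← card_biUnion]
  · congr 1
    ext b
    simp
  · intro i _ k _ hik
    exact disjoint_filter.2 fun b _ hi hk => hik (huniq b i k hi hk)

lemma card_filter_forall_ne_lt_eq_sum {ι κ α : Type*} [Fintype ι] [DecidableEq ι] [Fintype κ]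
    [DecidableEq κ] [LT α] [DecidableLT α] (s : ι → κ → α) (i : ι)
    [DecidablePred fun w : ι → κ => ∀ n ≠ i, s n (w n) < s i (w i)] :
    #{w : ι → κ | ∀ n ≠ i, s n (w n) < s i (w i)} =
      ∑ j, #{w : ι → κ | w i = j ∧ ∀ n ≠ i, s n (w n) < s i j} := by
  rw [card_eq_sum_card_fiberwise (f := fun w => w i) (t := univ) fun _ _ => mem_univ _]
  refine sum_congr rfl fun j _ => congrArg card ?_
  ext w
  simp only [mem_filter, mem_univ, true_and]
  constructor
  · rintro ⟨h, rfl⟩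
    exact ⟨rfl, h⟩
  · rintro ⟨rfl, h⟩
    exact ⟨h, rfl⟩

lemma card_filter_apply_eq_and_forall_ne {ι κ : Type*} [Fintype ι] [DecidableEq ι]
    [Fintype κ] [DecidableEq κ] (p : ι → κ → Prop) [∀ n, DecidablePred (p n)] (i : ι) (j : κ)
    [DecidablePred fun w : ι → κ => w i = j ∧ ∀ n ≠ i, p n (w n)] :
    #{w : ι → κ | w i = j ∧ ∀ n ≠ i, p n (w n)} = ∏ n ∈ univ.erase i, #{m | p n m} := by
  have hpi : ({w | w i = j ∧ ∀ n ≠ i, p n (w n)} : Finset (ι → κ)) =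
      Fintype.piFinset fun n => if n = i then {j} else ({m | p n m} : Finset κ) := by
    ext w
    simp only [Fintype.mem_piFinset, mem_filter, mem_univ, true_and]
    constructor
    · rintro ⟨rfl, h⟩ n
      split_ifs with hn
      · simp [hn]
      · simpa using h n hn
    · intro h
      exact ⟨by simpa using h i, fun n hn => by simpa [hn] using h n⟩
  rw [hpi, Fintype.card_piFinset, ← mul_prod_erase univ _ (mem_univ i)]
  simp only [if_pos, card_singleton, one_mul]
  exact prod_congr rfl fun n hn => by rw [if_neg (ne_of_mem_erase hn)]

lemma card_filter_lt_eq_alpha {N M : ℕ} {s : Fin N → Fin M → ℝ}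
    (hs : Function.Injective fun p : Fin N × Fin M => s p.1 p.2) {i n : Fin N} (hni : n ≠ i)
    (j : Fin M) : #{m | s n m < s i j} = alpha s i j n := by
  refine congrArg card (filter_congr fun m _ => ?_)
  have hne : s n m ≠ s i j := fun h => hni (congrArg Prod.fst (@hs (n, m) (i, j) h))
  exact ⟨le_of_lt, fun h => lt_of_le_of_ne h hne⟩

theorem stmt6_general (N M : ℕ)
    {Y : Type*} [DecidableEq Y] (y : Fin N → Y)
    (s : Fin N → Fin M → ℝ)
    (hs : Function.Injective fun p : Fin N × Fin M => s p.1 p.2)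
    (l : Y) :
    (Finset.univ.filter fun w : Fin N → Fin M =>
        ∃ i : Fin N, y i = l ∧ ∀ i' : Fin N, i' ≠ i → s i' (w i') < s i (w i)).card =
      ∑ i ∈ Finset.univ.filter (fun i : Fin N => y i = l), ∑ j : Fin M,
        ∏ n ∈ Finset.univ.erase i, alpha s i j n := by
  rw [card_filter_exists_eq_sum_of_unique _ _ fun _ _ _ => eq_of_forall_ne_lt]
  refine sum_congr rfl fun i _ => ?_
  rw [card_filter_forall_ne_lt_eq_sum]
  refine sum_congr rfl fun j _ => ?_
  rw [card_filter_apply_eq_and_forall_ne fun n m => s n m < s i j]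
  exact prod_congr rfl fun n hn => card_filter_lt_eq_alpha hs (ne_of_mem_erase hn) j

/-- If `N ≥ 1`, `K = 1`, and all similarities are pairwise distinct, then
for every label `l`, the number of possible worlds whose 1-NN prediction is `l` (i.e. whose
unique similarity-maximizing index has label `l`) equals
`Σ_{i : y i = l} Σ_j ∏_{n ≠ i} α_{i,j}[n]`. -/
theorem stmt6 (N M : ℕ) (hN : 1 ≤ N)
    {Y : Type*} [DecidableEq Y] (y : Fin N → Y)
    (s : Fin N → Fin M → ℝ)
    (hs : Function.Injective fun p : Fin N × Fin M => s p.1 p.2)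
    (l : Y) :
    (Finset.univ.filter fun w : Fin N → Fin M =>
        ∃ i : Fin N, y i = l ∧ ∀ i' : Fin N, i' ≠ i → s i' (w i') < s i (w i)).card =
      ∑ i ∈ Finset.univ.filter (fun i : Fin N => y i = l), ∑ j : Fin M,
        ∏ n ∈ Finset.univ.erase i, alpha s i j n :=
  stmt6_general N M y s hs l
end

section
/- (Monotonicity lemma for the MM algorithm.) Assume binary labels 𝒴 = {0,1}, 1 ≤ K ≤ N with K odd, and all N·M similarity values s_{i,j} pairwise distinct. Fix a label l ∈ 𝒴 and let w^{(1)}, w^{(2)} be possible worlds such that for every i ∈ {1,…,N}: either y_i = l and s_{i,w^{(1)}(i)} ≤ s_{i,w^{(2)}(i)}, or y_i ≠ l and s_{i,w^{(1)}(i)} ≥ s_{i,w^{(2)}(i)}. If the K-NN prediction of w^{(1)} is l, then the K-NN prediction of w^{(2)} is also l. -/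
open Finset

/-- For binary labels and odd `K`, the K-NN prediction of `w` is `l` iff `l` is the strict
majority label among the top-`K` set of `w`. -/
def predicts {N M : ℕ} {Y : Type*} [DecidableEq Y]
    (s : Fin N → Fin M → ℝ) (K : ℕ) (y : Fin N → Y) (w : Fin N → Fin M) (l : Y) : Prop :=
  K < 2 * ((topK s K w).filter fun i => y i = l).card

lemma topK_card_ge {N M K : ℕ} (hKN : K ≤ N) (s : Fin N → Fin M → ℝ)
    (hs : Function.Injective fun p : Fin N × Fin M => s p.1 p.2) (w : Fin N → Fin M) :
    K ≤ (topK s K w).card := by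
  by_contra hlt
  push_neg at hlt
  have hv : Function.Injective fun i : Fin N => s i (w i) := by
    intro i j hij
    have h2 : ((i, w i) : Fin N × Fin M) = (j, w j) := hs hij
    exact (Prod.ext_iff.mp h2).1
  have hC : ((univ : Finset (Fin N)) \ topK s K w).Nonempty := by
    rw [← card_pos, card_sdiff_of_subset (subset_univ _), card_univ, Fintype.card_fin]
    omega
  obtain ⟨i, hiC, hmax⟩ := exists_max_image _ (fun i => s i (w i)) hC
  have hiN : i ∉ topK s K w := (mem_sdiff.mp hiC).2
  have hKlt : K < (univ.filter fun i' => s i (w i) ≤ s i' (w i')).card := by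
    simp only [topK, mem_filter, mem_univ, true_and, not_le] at hiN
    exact hiN
  have hsub : (univ.filter fun i' => s i (w i) ≤ s i' (w i')) ⊆
      insert i (topK s K w) := by
    intro j hj
    have hj' : s i (w i) ≤ s j (w j) := (mem_filter.mp hj).2
    by_cases hjT : j ∈ topK s K w
    · exact mem_insert_of_mem hjT
    · have hjC : j ∈ (univ : Finset (Fin N)) \ topK s K w := by
        simp [mem_sdiff, hjT]
      have : s j (w j) ≤ s i (w i) := hmax j hjC
      have : j = i := hv (le_antisymm this hj')
      simp [this]
  have := card_le_card hsub
  have := card_insert_le i (topK s K w)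
  omega

/-- **monotonicity lemma for the MM algorithm.** For binary labels
`𝒴 = {0,1}`, `1 ≤ K ≤ N` odd, and pairwise distinct similarities: if for every `i` either
`y i = l` and `s i (w₁ i) ≤ s i (w₂ i)`, or `y i ≠ l` and `s i (w₁ i) ≥ s i (w₂ i)`, and
the K-NN prediction of `w₁` is `l`, then the K-NN prediction of `w₂` is also `l`. -/
theorem stmt8 (N M K : ℕ) (hK1 : 1 ≤ K) (hKN : K ≤ N) (hKodd : Odd K)
    (y : Fin N → Fin 2)
    (s : Fin N → Fin M → ℝ)
    (hs : Function.Injective fun p : Fin N × Fin M => s p.1 p.2)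
    (l : Fin 2) (w₁ w₂ : Fin N → Fin M)
    (h : ∀ i : Fin N,
      (y i = l ∧ s i (w₁ i) ≤ s i (w₂ i)) ∨ (y i ≠ l ∧ s i (w₂ i) ≤ s i (w₁ i))) :
    predicts s K y w₁ l → predicts s K y w₂ l := by
  intro hp
  by_contra hnp
  unfold predicts at hp hnp
  push_neg at hnp
  set A := (topK s K w₁).filter (fun i => y i = l) with hAdef
  set B := (topK s K w₂).filter (fun i => y i ≠ l) with hBdef
  have hT₂card : K ≤ (topK s K w₂).card := topK_card_ge hKN s hs w₂
  have hsplit : ((topK s K w₂).filter (fun i => y i = l)).card + B.card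
      = (topK s K w₂).card := card_filter_add_card_filter_not (p := fun i => y i = l)
  have hABcard : K + 1 ≤ A.card + B.card := by omega
  have hAne : A.Nonempty := card_pos.mp (by omega)
  have hBne : B.Nonempty := card_pos.mp (by omega)
  obtain ⟨i₀, hi₀A, hmin₀⟩ := exists_min_image A (fun i => s i (w₁ i)) hAne
  obtain ⟨i₁, hi₁B, hmin₁⟩ := exists_min_image B (fun i => s i (w₂ i)) hBne
  have hi₀T : i₀ ∈ topK s K w₁ := mem_of_mem_filter _ hi₀A
  have hi₁T : i₁ ∈ topK s K w₂ := mem_of_mem_filter _ hi₁B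
  have hdisj : Disjoint A B := by
    rw [Finset.disjoint_left]
    intro a haA haB
    exact (mem_filter.mp haB).2 (mem_filter.mp haA).2
  rcases le_total (s i₁ (w₂ i₁)) (s i₀ (w₁ i₀)) with hc | hc
  · -- threshold is s i₁ (w₂ i₁); count in world w₂
    have hK : (univ.filter fun i' => s i₁ (w₂ i₁) ≤ s i' (w₂ i')).card ≤ K := by
      have := hi₁T
      simp only [topK, mem_filter, mem_univ, true_and] at this
      exact this
    have hsub : A ∪ B ⊆ univ.filter fun i' => s i₁ (w₂ i₁) ≤ s i' (w₂ i') := by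
      intro j hj
      simp only [mem_filter, mem_univ, true_and]
      rcases mem_union.mp hj with hj | hj
      · have hyl : y j = l := (mem_filter.mp hj).2
        rcases h j with ⟨_, hle⟩ | ⟨hne, _⟩
        · exact hc.trans ((hmin₀ j hj).trans hle)
        · exact absurd hyl hne
      · exact hmin₁ j hj
    have h1 := card_le_card hsub
    rw [card_union_of_disjoint hdisj] at h1
    omega
  · -- threshold is s i₀ (w₁ i₀); count in world w₁
    have hK : (univ.filter fun i' => s i₀ (w₁ i₀) ≤ s i' (w₁ i')).card ≤ K := by
      have := hi₀T
      simp only [topK, mem_filter, mem_univ, true_and] at this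
      exact this
    have hsub : A ∪ B ⊆ univ.filter fun i' => s i₀ (w₁ i₀) ≤ s i' (w₁ i') := by
      intro j hj
      simp only [mem_filter, mem_univ, true_and]
      rcases mem_union.mp hj with hj | hj
      · exact hmin₀ j hj
      · have hyl : y j ≠ l := (mem_filter.mp hj).2
        rcases h j with ⟨hl, _⟩ | ⟨_, hle⟩
        · exact absurd hl hyl
        · exact hc.trans ((hmin₁ j hj).trans hle)
    have h1 := card_le_card hsub
    rw [card_union_of_disjoint hdisj] at h1
    omega
end

section
/- (Extreme-world characterization for the MM algorithm.) Assume binary labels 𝒴 = {0,1}, 1 ≤ K ≤ N with K odd, and all N·M similarity values s_{i,j} pairwise distinct. For every label l ∈ 𝒴, the K-NN prediction of the l-extreme world E_l is l if and only if there exists a possible world whose K-NN prediction is l. -/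
open Finset

/-- `e` is the `l`-extreme world: for each `i`, `e i` is the candidate most similar to
the test point if `y i = l`, and the candidate least similar to the test point
otherwise. -/
def IsExtremeWorld {N M : ℕ} {Y : Type*} (s : Fin N → Fin M → ℝ) (y : Fin N → Y) (l : Y)
    (e : Fin N → Fin M) : Prop :=
  ∀ i : Fin N,
    (y i = l → ∀ j : Fin M, s i j ≤ s i (e i)) ∧ (y i ≠ l → ∀ j : Fin M, s i (e i) ≤ s i j)

/-! With distinct scores, at least `m` indices satisfying `p` lie in the top `K` exactly when
some threshold `θ` has at least `m` such indices at or above it and at most `K - m` indices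
violating `p` there. Raising the scores of the `p`-indices and lowering the others preserves
such a threshold, and the `l`-extreme world does exactly this to any possible world. -/

section Rank

variable {ι α : Type*} [LinearOrder α] (t : ι → α)

def rank (A : Finset ι) (i : ι) : ℕ := #{j ∈ A | t i ≤ t j}

variable {t}

lemma rank_lt_rank {A : Finset ι} {i j : ι} (hi : i ∈ A) (h : t i < t j) :
    rank t A j < rank t A i :=
  card_lt_card ⟨monotone_filter_right _ fun _ _ hk => h.le.trans hk,
    fun hsub => (mem_filter.mp (hsub (mem_filter.mpr ⟨hi, le_rfl⟩))).2.not_gt h⟩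

lemma rank_injOn {A : Finset ι} (ht : Set.InjOn t A) : Set.InjOn (rank t A) A := by
  intro i hi j hj hij
  rcases lt_trichotomy (t i) (t j) with h | h | h
  · exact absurd hij.symm (rank_lt_rank hi h).ne
  · exact ht hi hj h
  · exact absurd hij (rank_lt_rank hj h).ne

lemma image_rank {A : Finset ι} (ht : Set.InjOn t A) :
    A.image (rank t A) = Icc 1 #A := by
  refine eq_of_subset_of_card_le (fun n hn => ?_) ?_
  · obtain ⟨i, hi, rfl⟩ := mem_image.mp hn
    exact mem_Icc.mpr ⟨card_pos.mpr ⟨i, mem_filter.mpr ⟨hi, le_rfl⟩⟩, card_filter_le _ _⟩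
  · rw [Nat.card_Icc, card_image_of_injOn (rank_injOn ht)]
    omega

lemma card_filter_rank_le {A : Finset ι} (ht : Set.InjOn t A) (m : ℕ) :
    #{i ∈ A | rank t A i ≤ m} = min m #A := by
  have hinj : Set.InjOn (rank t A) ({i ∈ A | rank t A i ≤ m} : Finset ι) :=
    (rank_injOn ht).mono fun _ hi => mem_of_mem_filter _ hi
  rw [← card_image_of_injOn hinj, ← filter_image (p := (· ≤ m)), image_rank ht,
    show {n ∈ Icc 1 #A | n ≤ m} = Icc 1 (min m #A) by ext; simp only [mem_filter, mem_Icc]; omega,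
    Nat.card_Icc, Nat.add_sub_cancel]

end Rank

section Top

variable {ι α : Type*} [Fintype ι] [LinearOrder α] {t t' : ι → α} {K m : ℕ}
  {p : ι → Prop} [DecidablePred p]

def top (t : ι → α) (K : ℕ) : Finset ι := {i | rank t univ i ≤ K}

lemma card_filter_le_eq_add (t : ι → α) (p : ι → Prop) [DecidablePred p] (θ : α) :
    #{j | θ ≤ t j} = #{j | θ ≤ t j ∧ p j} + #{j | θ ≤ t j ∧ ¬ p j} := by
  rw [← card_filter_add_card_filter_not (s := {j | θ ≤ t j}) p, filter_filter, filter_filter]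

lemma exists_threshold_of_le_card_top (hm : 0 < m) (h : m ≤ #{i ∈ top t K | p i}) :
    ∃ θ, m ≤ #{j | θ ≤ t j ∧ p j} ∧ m + #{j | θ ≤ t j ∧ ¬ p j} ≤ K := by
  obtain ⟨i₀, hi₀, hmin⟩ := exists_min_image {i ∈ top t K | p i} t (card_pos.mp (hm.trans_le h))
  have hsub : {i ∈ top t K | p i} ⊆ ({j | t i₀ ≤ t j ∧ p j} : Finset ι) := fun i hi =>
    mem_filter.mpr ⟨mem_univ _, hmin i hi, (mem_filter.mp hi).2⟩
  have hrank : rank t univ i₀ ≤ K := (mem_filter.mp (mem_filter.mp hi₀).1).2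
  refine ⟨t i₀, h.trans (card_le_card hsub), ?_⟩
  have := card_filter_le_eq_add t p (t i₀)
  have := card_le_card hsub
  unfold rank at hrank
  omega

lemma le_card_top_of_threshold (ht : Function.Injective t) {θ : α}
    (hp : m ≤ #{j | θ ≤ t j ∧ p j}) (hnp : m + #{j | θ ≤ t j ∧ ¬ p j} ≤ K) :
    m ≤ #{i ∈ top t K | p i} := by
  set S : Finset ι := {j | θ ≤ t j ∧ p j}
  have hS : #{i ∈ S | rank t S i ≤ m} = m := by
    rw [card_filter_rank_le ht.injOn]; omega
  rw [← hS]
  refine card_le_card fun i hi => ?_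
  obtain ⟨hiS, hrank⟩ := mem_filter.mp hi
  obtain ⟨hθi, hpi⟩ := (mem_filter.mp hiS).2
  have hsplit := card_filter_le_eq_add t p (t i)
  have hp_le : #{j | t i ≤ t j ∧ p j} ≤ rank t S i :=
    card_le_card fun j hj => by
      obtain ⟨hij, hpj⟩ := (mem_filter.mp hj).2
      exact mem_filter.mpr ⟨mem_filter.mpr ⟨mem_univ _, hθi.trans hij, hpj⟩, hij⟩
  have hnp_le : #{j | t i ≤ t j ∧ ¬ p j} ≤ #{j | θ ≤ t j ∧ ¬ p j} :=
    card_le_card <| monotone_filter_right _ fun _ _ h => ⟨hθi.trans h.1, h.2⟩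
  refine mem_filter.mpr ⟨mem_filter.mpr ⟨mem_univ _, ?_⟩, hpi⟩
  unfold rank
  omega

lemma card_top_filter_mono (ht' : Function.Injective t')
    (hup : ∀ i, p i → t i ≤ t' i) (hdown : ∀ i, ¬ p i → t' i ≤ t i) :
    #{i ∈ top t K | p i} ≤ #{i ∈ top t' K | p i} := by
  rcases Nat.eq_zero_or_pos #{i ∈ top t K | p i} with h0 | hpos
  · exact h0 ▸ Nat.zero_le _
  obtain ⟨θ, hp, hnp⟩ := exists_threshold_of_le_card_top hpos le_rfl
  refine le_card_top_of_threshold (θ := θ) ht' (hp.trans (card_le_card ?_)) (le_trans ?_ hnp)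
  · exact monotone_filter_right _ fun i _ h => ⟨h.1.trans (hup i h.2), h.2⟩
  · exact Nat.add_le_add_left (card_le_card <| monotone_filter_right _
      fun i _ h => ⟨h.1.trans (hdown i h.2), h.2⟩) _

end Top

theorem stmt9_general (N M K : ℕ)
    (y : Fin N → Fin 2)
    (s : Fin N → Fin M → ℝ)
    (hs : Function.Injective fun p : Fin N × Fin M => s p.1 p.2)
    (l : Fin 2) (e : Fin N → Fin M) (he : IsExtremeWorld s y l e) :
    predicts s K y e l ↔ ∃ w : Fin N → Fin M, predicts s K y w l := by
  refine ⟨fun h => ⟨e, h⟩, fun ⟨w, hw⟩ => hw.trans_le ?_⟩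
  have hinj : Function.Injective fun i => s i (e i) := fun i j hij =>
    congrArg Prod.fst (hs (a₁ := (i, e i)) (a₂ := (j, e j)) hij)
  -- `topK s K v` unfolds to `top (fun i => s i (v i)) K`.
  exact Nat.mul_le_mul_left 2 <| card_top_filter_mono (K := K) hinj
    (fun i hi => (he i).1 hi (w i)) (fun i hi => (he i).2 hi (w i))

/-- **extreme-world characterization for the MM algorithm.** For binary
labels `𝒴 = {0,1}`, `1 ≤ K ≤ N` odd, and pairwise distinct similarities: the K-NN
prediction of the `l`-extreme world `E_l` is `l` iff there exists a possible world whose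
K-NN prediction is `l`. -/
theorem stmt9 (N M K : ℕ) (hK1 : 1 ≤ K) (hKN : K ≤ N) (hKodd : Odd K)
    (y : Fin N → Fin 2)
    (s : Fin N → Fin M → ℝ)
    (hs : Function.Injective fun p : Fin N × Fin M => s p.1 p.2)
    (l : Fin 2) (e : Fin N → Fin M) (he : IsExtremeWorld s y l e) :
    predicts s K y e l ↔ ∃ w : Fin N → Fin M, predicts s K y w l :=
  stmt9_general N M K y s hs l e he
end
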